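/- arXiv:2005.05986 — 6 statements merged into one kernel-verified Lean document; each statement's English description precedes it below -/
import Mathlib

section
/- Let N be a positive integer and let H₁, H₂ ∈ M_{2N}(ℂ) be Hermitian positive-definite matrices satisfying the bosonic constraint τ₁ Hᵢ* τ₁ = Hᵢ (i = 1, 2). For s ∈ [0,1] define H(s) = (1−s)H₁ + sH₂. Then for every s ∈ [0,1]: (i) H(s) is Hermitian and positive definite; (ii) τ₁ H(s)* τ₁ = H(s); (iii) every matrix V ∈ M_{2N}(ℂ) commuting with both H₁ and H₂ commutes with H(s); and (iv) every matrix V ∈ M_{2N}(ℂ) with V H₁* = H₁ V and V H₂* = H₂ V satisfies V H(s)* = H(s) V. Hence any two gapped stable quadratic bosonic Hamiltonians sharing a group of linear or antilinear Gaussian symmetries are connected by a path of gapped symmetry-preserving quadratic bosonic Hamiltonians (no symmetry-protected topological phases of free bosons). -/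
open Matrix
open scoped ComplexOrder

/-!
Each condition defining a gapped stable bosonic Hamiltonian with a given symmetry is either
real-linear in `H` (the bosonic constraint and the linear or antilinear symmetry relations, since
entrywise conjugation is `ℝ`-linear) or stable under conic combinations (positive definiteness),
so it holds along the whole segment between two such Hamiltonians.
-/

/-- `τ₁ = σ₁ ⊗ 1_N`, the 2N×2N matrix with block form [[0, 1],[1, 0]]. -/
noncomputable def tau1 (N : ℕ) : Matrix (Fin N ⊕ Fin N) (Fin N ⊕ Fin N) ℂ :=
  Matrix.fromBlocks 0 1 1 0

namespace Matrix

variable {n : Type*} {A B : Matrix n n ℂ}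

theorem PosDef.ofReal_smul_add_ofReal_smul (hA : A.PosDef) (hB : B.PosDef) {a b : ℝ}
    (ha : 0 ≤ a) (hb : 0 ≤ b) (hab : 0 < a + b) :
    ((a : ℂ) • A + (b : ℂ) • B).PosDef := by
  rcases ha.lt_or_eq with ha | rfl
  · exact (hA.smul (by exact_mod_cast ha)).add_posSemidef
      (hB.posSemidef.smul (by exact_mod_cast hb))
  · exact PosDef.posSemidef_add (hA.posSemidef.smul (by simp)) (hB.smul (by simpa using hab))

theorem map_conj_ofReal_smul_add_ofReal_smul (a b : ℝ) :
    ((a : ℂ) • A + (b : ℂ) • B).map (starRingEnd ℂ)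
      = (a : ℂ) • A.map (starRingEnd ℂ) + (b : ℂ) • B.map (starRingEnd ℂ) := by
  ext i j
  simp

theorem conj_sandwich_ofReal_smul_add_ofReal_smul [Fintype n] {P Q : Matrix n n ℂ}
    (hA : P * A.map (starRingEnd ℂ) * Q = A) (hB : P * B.map (starRingEnd ℂ) * Q = B)
    (a b : ℝ) :
    P * ((a : ℂ) • A + (b : ℂ) • B).map (starRingEnd ℂ) * Q = (a : ℂ) • A + (b : ℂ) • B := by
  rw [map_conj_ofReal_smul_add_ofReal_smul, mul_add, add_mul, Matrix.mul_smul, Matrix.mul_smul,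
    Matrix.smul_mul, Matrix.smul_mul, hA, hB]

theorem conj_intertwine_ofReal_smul_add_ofReal_smul [Fintype n] {V : Matrix n n ℂ}
    (hA : V * A.map (starRingEnd ℂ) = A * V) (hB : V * B.map (starRingEnd ℂ) = B * V)
    (a b : ℝ) :
    V * ((a : ℂ) • A + (b : ℂ) • B).map (starRingEnd ℂ) = ((a : ℂ) • A + (b : ℂ) • B) * V := by
  rw [map_conj_ofReal_smul_add_ofReal_smul, mul_add, add_mul, Matrix.mul_smul, Matrix.mul_smul,
    Matrix.smul_mul, Matrix.smul_mul, hA, hB]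

end Matrix

theorem no_SPT_phases_free_bosons_general (N : ℕ)
    (H1 H2 : Matrix (Fin N ⊕ Fin N) (Fin N ⊕ Fin N) ℂ)
    (h1pos : H1.PosDef) (h2pos : H2.PosDef)
    (h1b : tau1 N * H1.map (starRingEnd ℂ) * tau1 N = H1)
    (h2b : tau1 N * H2.map (starRingEnd ℂ) * tau1 N = H2)
    (s : ℝ) (hs : s ∈ Set.Icc (0 : ℝ) 1) :
    (((1 - s : ℝ) : ℂ) • H1 + ((s : ℝ) : ℂ) • H2).IsHermitian ∧
    (((1 - s : ℝ) : ℂ) • H1 + ((s : ℝ) : ℂ) • H2).PosDef ∧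
    tau1 N * (((1 - s : ℝ) : ℂ) • H1 + ((s : ℝ) : ℂ) • H2).map (starRingEnd ℂ) * tau1 N
      = ((1 - s : ℝ) : ℂ) • H1 + ((s : ℝ) : ℂ) • H2 ∧
    (∀ V : Matrix (Fin N ⊕ Fin N) (Fin N ⊕ Fin N) ℂ,
      V * H1 = H1 * V → V * H2 = H2 * V →
      V * (((1 - s : ℝ) : ℂ) • H1 + ((s : ℝ) : ℂ) • H2)
        = (((1 - s : ℝ) : ℂ) • H1 + ((s : ℝ) : ℂ) • H2) * V) ∧
    (∀ V : Matrix (Fin N ⊕ Fin N) (Fin N ⊕ Fin N) ℂ,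
      V * H1.map (starRingEnd ℂ) = H1 * V → V * H2.map (starRingEnd ℂ) = H2 * V →
      V * (((1 - s : ℝ) : ℂ) • H1 + ((s : ℝ) : ℂ) • H2).map (starRingEnd ℂ)
        = (((1 - s : ℝ) : ℂ) • H1 + ((s : ℝ) : ℂ) • H2) * V) := by
  have hpos : (((1 - s : ℝ) : ℂ) • H1 + ((s : ℝ) : ℂ) • H2).PosDef :=
    h1pos.ofReal_smul_add_ofReal_smul h2pos (sub_nonneg.2 hs.2) hs.1 (by simp)
  exact ⟨hpos.isHermitian, hpos, conj_sandwich_ofReal_smul_add_ofReal_smul h1b h2b _ _,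
    fun V hV1 hV2 =>
      ((Commute.smul_right hV1 ((1 - s : ℝ) : ℂ)).add_right (Commute.smul_right hV2 (s : ℂ)) :),
    fun V hV1 hV2 => conj_intertwine_ofReal_smul_add_ofReal_smul hV1 hV2 _ _⟩

/-- No symmetry-protected topological phases of gapped stable free bosons:
the straight-line path between two gapped stable bosonic coefficient matrices
stays Hermitian, positive definite, bosonic, and preserves all shared linear
and antilinear symmetries. -/
theorem no_SPT_phases_free_bosons (N : ℕ) (hN : 0 < N)
    (H1 H2 : Matrix (Fin N ⊕ Fin N) (Fin N ⊕ Fin N) ℂ)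
    (h1herm : H1.IsHermitian) (h2herm : H2.IsHermitian)
    (h1pos : H1.PosDef) (h2pos : H2.PosDef)
    (h1b : tau1 N * H1.map (starRingEnd ℂ) * tau1 N = H1)
    (h2b : tau1 N * H2.map (starRingEnd ℂ) * tau1 N = H2)
    (s : ℝ) (hs : s ∈ Set.Icc (0 : ℝ) 1) :
    (((1 - s : ℝ) : ℂ) • H1 + ((s : ℝ) : ℂ) • H2).IsHermitian ∧
    (((1 - s : ℝ) : ℂ) • H1 + ((s : ℝ) : ℂ) • H2).PosDef ∧
    tau1 N * (((1 - s : ℝ) : ℂ) • H1 + ((s : ℝ) : ℂ) • H2).map (starRingEnd ℂ) * tau1 N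
      = ((1 - s : ℝ) : ℂ) • H1 + ((s : ℝ) : ℂ) • H2 ∧
    (∀ V : Matrix (Fin N ⊕ Fin N) (Fin N ⊕ Fin N) ℂ,
      V * H1 = H1 * V → V * H2 = H2 * V →
      V * (((1 - s : ℝ) : ℂ) • H1 + ((s : ℝ) : ℂ) • H2)
        = (((1 - s : ℝ) : ℂ) • H1 + ((s : ℝ) : ℂ) • H2) * V) ∧
    (∀ V : Matrix (Fin N ⊕ Fin N) (Fin N ⊕ Fin N) ℂ,
      V * H1.map (starRingEnd ℂ) = H1 * V → V * H2.map (starRingEnd ℂ) = H2 * V →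
      V * (((1 - s : ℝ) : ℂ) • H1 + ((s : ℝ) : ℂ) • H2).map (starRingEnd ℂ)
        = (((1 - s : ℝ) : ℂ) • H1 + ((s : ℝ) : ℂ) • H2) * V) :=
  no_SPT_phases_free_bosons_general N H1 H2 h1pos h2pos h1b h2b s hs
end

section
/- Let d be a positive integer and let G : ℤ → M_d(ℂ) be finitely supported with G(−m) = G(m)ᴴ for all m ∈ ℤ, so that the symbol Ĝ(k) = Σ_{m∈ℤ} e^{imk} G(m) is a Hermitian matrix for every k ∈ ℝ. Assume Ĝ(k) is positive definite for every k ∈ ℝ. If x : ℕ → ℂ^d is square-summable (Σ_{i∈ℕ} ‖x(i)‖² < ∞) and satisfies Σ_{j∈ℕ} G(i−j)·x(j) = 0 for every i ∈ ℕ (a finite sum for each i), then x = 0. That is, the half-infinite banded block-Toeplitz operator with positive-definite symbol has trivial square-summable kernel; since the on-site metric is invertible, zero is not an eigenvalue of the effective BdG Hamiltonian of the corresponding gapped free-boson system subject to open boundary conditions. -/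
/-!
Let `x_N` be the truncation of `x` to its first `N` sites and `Q_N` the quadratic form of the
`N × N` section of the operator. Parseval's identity for `p(k) = Σ_{j<N} e^{ijk} x_j` gives
`2π Q_N(x_N) = ∫₀^{2π} p(k)ᴴ Ĝ(k) p(k) dk`, and by compactness `Ĝ(k) ≥ ε` uniformly in `k`,
so `Re Q_N(x_N) ≥ ε ‖x_N‖²`. On the other hand, since `G` is supported in `[-B, B]` and
`G^o x = 0`, the form `Q_{m+B}(x_{m+B})` reduces to boundary terms pairing `x_r` and `x_c` with
`m ≤ r < m + B ≤ c < m + 2B`; these tend to `0` because `x_i → 0`. Hence `‖x_N‖` is bounded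
by a quantity tending to `0`, so `x = 0`.
-/

open Matrix
open scoped ComplexOrder

/-- The symbol `Ĝ(k) = Σ_{m ∈ ℤ} e^{imk} G(m)` of a banded block-Toeplitz operator. -/
noncomputable def toeplitzSymbol (d : ℕ) (G : ℤ → Matrix (Fin d) (Fin d) ℂ) (k : ℝ) :
    Matrix (Fin d) (Fin d) ℂ :=
  ∑ᶠ m : ℤ, Complex.exp (Complex.I * (m : ℂ) * (k : ℂ)) • G m

open Complex Finset Filter Topology
open scoped Real

lemma toeplitzSymbol_eq_sum {d : ℕ} {G : ℤ → Matrix (Fin d) (Fin d) ℂ} {S : Finset ℤ}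
    (hS : Function.support G ⊆ S) (k : ℝ) :
    toeplitzSymbol d G k = ∑ m ∈ S, exp (I * m * k) • G m :=
  finsum_eq_sum_of_support_subset _ fun _ hm =>
    hS (Function.support_smul_subset_right (fun m : ℤ => exp (I * m * k)) G hm)

lemma continuous_toeplitzSymbol {d : ℕ} {G : ℤ → Matrix (Fin d) (Fin d) ℂ}
    (hfin : (Function.support G).Finite) : Continuous (toeplitzSymbol d G) := by
  rw [funext (toeplitzSymbol_eq_sum hfin.coe_toFinset.ge)]
  fun_prop

lemma integral_exp_int_mul_I (n : ℤ) :
    ∫ k in (0 : ℝ)..2 * π, exp (I * n * k) = if n = 0 then (2 * π : ℂ) else 0 := by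
  split_ifs with hn
  · simp [hn]
  have hper : exp (I * n * (2 * π : ℝ)) = 1 := by
    rw [show I * n * (2 * π : ℝ) = n * (2 * π * I) by push_cast; ring]
    exact exp_int_mul_two_pi_mul_I n
  rw [integral_exp_mul_complex (by simp [hn]), hper]
  simp

lemma integral_exp_mul_sum_exp_mul {S : Finset ℤ} {b : ℤ → ℂ} (hb : Function.support b ⊆ S)
    (n : ℤ) :
    ∫ k in (0 : ℝ)..2 * π, exp (I * n * k) * ∑ m ∈ S, exp (I * m * k) * b m = 2 * π * b (-n) := by
  have hterm : ∀ (m : ℤ) (k : ℝ), exp (I * n * k) * (exp (I * m * k) * b m)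
      = exp (I * (n + m : ℤ) * k) * b m := by
    intro m k
    rw [← mul_assoc, ← exp_add]
    push_cast
    ring_nf
  simp_rw [Finset.mul_sum, hterm]
  rw [intervalIntegral.integral_finsetSum fun m _ =>
    (Continuous.intervalIntegrable (by fun_prop) _ _)]
  simp_rw [intervalIntegral.integral_mul_const, integral_exp_int_mul_I, ite_mul, zero_mul,
    show ∀ m : ℤ, n + m = 0 ↔ m = -n from fun m => by omega]
  rw [Finset.sum_ite_eq']
  split_ifs with h
  · rfl
  · rw [Function.notMem_support.mp fun h' => h (hb h'), mul_zero]

def toeplitzSectionForm {n : Type*} [Fintype n] (G : ℤ → Matrix n n ℂ) (x : ℕ → n → ℂ)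
    (N : ℕ) : ℂ :=
  ∑ r ∈ range N, ∑ c ∈ range N, star (x r) ⬝ᵥ G (r - c) *ᵥ x c

lemma star_dotProduct_toeplitzSymbol_mulVec {d : ℕ} {G : ℤ → Matrix (Fin d) (Fin d) ℂ}
    {S : Finset ℤ} (hS : Function.support G ⊆ S) (k : ℝ) (u v : Fin d → ℂ) :
    star u ⬝ᵥ toeplitzSymbol d G k *ᵥ v = ∑ m ∈ S, exp (I * m * k) * (star u ⬝ᵥ G m *ᵥ v) := by
  simp only [toeplitzSymbol_eq_sum hS, sum_mulVec, dotProduct_sum, smul_mulVec, dotProduct_smul,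
    smul_eq_mul]

lemma integral_star_dotProduct_toeplitzSymbol_mulVec {d : ℕ} {G : ℤ → Matrix (Fin d) (Fin d) ℂ}
    (hfin : (Function.support G).Finite) (x : ℕ → Fin d → ℂ) (N : ℕ) :
    ∫ k in (0 : ℝ)..2 * π,
        star (∑ j ∈ range N, exp (I * j * k) • x j) ⬝ᵥ
          toeplitzSymbol d G k *ᵥ ∑ j ∈ range N, exp (I * j * k) • x j
      = 2 * π * toeplitzSectionForm G x N := by
  have hS := hfin.coe_toFinset.ge
  have hexpand : ∀ k : ℝ,
      star (∑ j ∈ range N, exp (I * j * k) • x j) ⬝ᵥ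
          toeplitzSymbol d G k *ᵥ ∑ j ∈ range N, exp (I * j * k) • x j
        = ∑ r ∈ range N, ∑ c ∈ range N, exp (I * (c - r : ℤ) * k) *
            ∑ m ∈ hfin.toFinset, exp (I * m * k) * (star (x r) ⬝ᵥ G m *ᵥ x c) := by
    intro k
    simp only [star_sum, star_smul, sum_dotProduct, dotProduct_sum, smul_dotProduct,
      mulVec_sum, mulVec_smul, dotProduct_smul, smul_eq_mul,
      ← star_dotProduct_toeplitzSymbol_mulVec hS, Finset.mul_sum]
    rw [sum_comm]
    refine sum_congr rfl fun r _ => sum_congr rfl fun c _ => ?_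
    rw [← mul_assoc, star_def, ← exp_conj, ← exp_add]
    congr 2
    simp only [map_mul, conj_I, conj_ofReal, conj_natCast]
    push_cast
    ring
  have hb : ∀ r c, Function.support (fun m => star (x r) ⬝ᵥ G m *ᵥ x c) ⊆ hfin.toFinset :=
    fun r c m hm => hS fun h => hm (by simp [h])
  simp_rw [hexpand]
  rw [intervalIntegral.integral_finsetSum fun r _ =>
    (Continuous.intervalIntegrable (by fun_prop) _ _)]
  rw [toeplitzSectionForm, Finset.mul_sum]
  refine sum_congr rfl fun r _ => ?_
  rw [intervalIntegral.integral_finsetSum fun c _ =>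
    (Continuous.intervalIntegrable (by fun_prop) _ _), Finset.mul_sum]
  refine sum_congr rfl fun c _ => ?_
  rw [integral_exp_mul_sum_exp_mul (hb r c), neg_sub]

lemma toeplitzSymbol_single_zero_one (d : ℕ) (k : ℝ) :
    toeplitzSymbol d (Pi.single 0 1) k = 1 := by
  rw [toeplitzSymbol, finsum_eq_single _ 0 fun m hm => by simp [hm]]
  simp

lemma toeplitzSectionForm_single_zero_one {n : Type*} [Fintype n] [DecidableEq n]
    (x : ℕ → n → ℂ) (N : ℕ) :
    toeplitzSectionForm (Pi.single 0 1) x N = ∑ r ∈ range N, star (x r) ⬝ᵥ x r := by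
  refine sum_congr rfl fun r hr => ?_
  rw [sum_eq_single r (fun c _ hc => by simp [sub_eq_zero, Ne.symm hc])
    (by simp [hr])]
  simp

lemma integral_re_eq_re_integral {f : ℝ → ℂ} {a b : ℝ}
    (hf : IntervalIntegrable f MeasureTheory.volume a b) :
    ∫ k in a..b, (f k).re = (∫ k in a..b, f k).re :=
  reCLM.intervalIntegral_comp_comm hf

lemma mul_sum_re_le_re_toeplitzSectionForm {d : ℕ} {G : ℤ → Matrix (Fin d) (Fin d) ℂ}
    (hfin : (Function.support G).Finite) {ε : ℝ}
    (hε : ∀ k ∈ Set.Icc 0 (2 * π), ∀ v,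
      ε * (star v ⬝ᵥ v).re ≤ (star v ⬝ᵥ toeplitzSymbol d G k *ᵥ v).re)
    (x : ℕ → Fin d → ℂ) (N : ℕ) :
    ε * ∑ r ∈ range N, (star (x r) ⬝ᵥ x r).re ≤ (toeplitzSectionForm G x N).re := by
  have hform := integral_star_dotProduct_toeplitzSymbol_mulVec hfin x N
  -- The identity operator `Pi.single 0 1` has symbol `1`, so this is Parseval for `‖x_N‖²`.
  have hnorm := integral_star_dotProduct_toeplitzSymbol_mulVec
    (G := Pi.single 0 1) ((Set.finite_singleton 0).subset Pi.support_single_subset) x N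
  simp only [toeplitzSymbol_single_zero_one, one_mulVec, toeplitzSectionForm_single_zero_one]
    at hnorm
  set p : ℝ → Fin d → ℂ := fun k => ∑ j ∈ range N, exp (I * j * k) • x j
  have hp : Continuous p := by fun_prop
  have hG := continuous_toeplitzSymbol hfin
  have hmono : ∫ k in (0 : ℝ)..2 * π, ε * (star (p k) ⬝ᵥ p k).re
      ≤ ∫ k in (0 : ℝ)..2 * π, (star (p k) ⬝ᵥ toeplitzSymbol d G k *ᵥ p k).re :=
    intervalIntegral.integral_mono_on (by positivity)
      (Continuous.intervalIntegrable (by fun_prop) _ _)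
      (Continuous.intervalIntegrable (by fun_prop) _ _) fun k hk => hε k hk (p k)
  rw [intervalIntegral.integral_const_mul,
    integral_re_eq_re_integral (Continuous.intervalIntegrable (by fun_prop) _ _),
    integral_re_eq_re_integral (Continuous.intervalIntegrable (by fun_prop) _ _), hnorm, hform]
    at hmono
  rw [show 2 * (π : ℂ) = (2 * π : ℝ) by push_cast; ring, re_ofReal_mul, re_ofReal_mul, re_sum,
    mul_left_comm] at hmono
  exact le_of_mul_le_mul_left hmono (by positivity)

lemma re_star_dotProduct_self_eq_norm_sq {n : Type*} [Fintype n] (v : n → ℂ) :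
    (star v ⬝ᵥ v).re = ‖WithLp.toLp 2 v‖ ^ 2 := by
  simp [EuclideanSpace.norm_sq_eq, dotProduct, re_sum, ← normSq_eq_norm_sq, normSq_apply]

lemma star_smul_dotProduct_mulVec_smul {n : Type*} [Fintype n] (M : Matrix n n ℂ) (t : ℝ)
    (v : n → ℂ) :
    star ((t : ℂ) • v) ⬝ᵥ M *ᵥ ((t : ℂ) • v) = (t ^ 2 : ℝ) * (star v ⬝ᵥ M *ᵥ v) := by
  rw [star_smul, mulVec_smul, smul_dotProduct, dotProduct_smul, smul_smul]
  simp [sq]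

lemma exists_pos_mul_re_le_re_dotProduct_mulVec {X n : Type*} [TopologicalSpace X] [Fintype n]
    {A : X → Matrix n n ℂ} (hA : Continuous A) {K : Set X} (hK : IsCompact K)
    (hpos : ∀ k ∈ K, (A k).PosDef) :
    ∃ ε > 0, ∀ k ∈ K, ∀ v : n → ℂ, ε * (star v ⬝ᵥ v).re ≤ (star v ⬝ᵥ A k *ᵥ v).re := by
  let q : X × EuclideanSpace ℂ n → ℝ := fun p => (star p.2.ofLp ⬝ᵥ A p.1 *ᵥ p.2.ofLp).re
  obtain ⟨ε, hε, hq⟩ := (hK.prod (isCompact_sphere (0 : EuclideanSpace ℂ n) 1)).exists_forall_le'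
    (a := 0) (f := q) (by fun_prop) fun p hp => by
      have hp0 : p.2.ofLp ≠ 0 :=
        ne_of_apply_ne (WithLp.toLp 2) (by simpa using ne_zero_of_mem_unit_sphere ⟨p.2, hp.2⟩)
      exact (Complex.lt_def.mp ((hpos p.1 hp.1).dotProduct_mulVec_pos hp0)).1
  refine ⟨ε, hε, fun k hk v => ?_⟩
  rcases eq_or_ne v 0 with rfl | hv
  · simp
  set t := ‖WithLp.toLp 2 v‖
  have ht : 0 < t := norm_pos_iff.2 (by simpa using hv)
  have hunit := hq (k, ((t⁻¹ : ℝ) : ℂ) • WithLp.toLp 2 v) ⟨hk, by simp [norm_smul, ht.ne', t]⟩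
  simp only [q, WithLp.ofLp_smul, star_smul_dotProduct_mulVec_smul, re_ofReal_mul, inv_pow,
    ← div_eq_inv_mul] at hunit
  rw [re_star_dotProduct_self_eq_norm_sq]
  rwa [le_div_iff₀ (by positivity)] at hunit

lemma exists_support_subset_Icc {M : Type*} [Zero M] {f : ℤ → M}
    (hf : (Function.support f).Finite) : ∃ B : ℕ, Function.support f ⊆ Set.Icc (-B : ℤ) B := by
  refine ⟨hf.toFinset.sup Int.natAbs, fun m hm => ?_⟩
  have := le_sup (f := Int.natAbs) (hf.mem_toFinset.mpr hm)
  constructor <;> omega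

lemma eq_zero_of_support_subset_Icc {M : Type*} [Zero M] {f : ℤ → M} {B : ℕ}
    (hB : Function.support f ⊆ Set.Icc (-B : ℤ) B) {m : ℤ} (hm : m < -B ∨ (B : ℤ) < m) :
    f m = 0 :=
  Function.notMem_support.mp fun h => by have := hB h; simp only [Set.mem_Icc] at this; omega

section Kernel

variable {n : Type*} [Fintype n] {G : ℤ → Matrix n n ℂ} {B : ℕ} {x : ℕ → n → ℂ}

lemma sum_range_mulVec_eq_zero_of_finsum_eq_zero (hB : Function.support G ⊆ Set.Icc (-B : ℤ) B)
    {i L : ℕ} (hker : ∑ᶠ j : ℕ, G (i - j) *ᵥ x j = 0) (hL : i + B < L) :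
    ∑ j ∈ range L, G (i - j) *ᵥ x j = 0 := by
  rwa [← finsum_eq_sum_of_support_subset]
  intro j hj
  by_contra hjL
  simp only [coe_range, Set.mem_Iio, not_lt] at hjL
  exact hj (by dsimp only; rw [eq_zero_of_support_subset_Icc hB (by omega), zero_mulVec])

lemma toeplitzSectionForm_add_eq_neg (hB : Function.support G ⊆ Set.Icc (-B : ℤ) B)
    (hker : ∀ i : ℕ, ∑ᶠ j : ℕ, G (i - j) *ᵥ x j = 0) (m : ℕ) :
    toeplitzSectionForm G x (m + B)
      = -∑ a ∈ range B, ∑ b ∈ range B, star (x (m + a)) ⬝ᵥ G (a - B - b) *ᵥ x (m + B + b) := by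
  have hrow : ∀ r < m + B, ∑ c ∈ range (m + B), G (r - c) *ᵥ x c
      = -∑ b ∈ range B, G (r - (m + B + b : ℕ)) *ᵥ x (m + B + b) := by
    intro r hr
    have h := sum_range_mulVec_eq_zero_of_finsum_eq_zero hB (hker r) (L := m + B + B) (by omega)
    rw [sum_range_add] at h
    exact eq_neg_of_add_eq_zero_left h
  calc toeplitzSectionForm G x (m + B)
      = ∑ r ∈ range (m + B), star (x r) ⬝ᵥ ∑ c ∈ range (m + B), G (r - c) *ᵥ x c := by
        simp only [toeplitzSectionForm, dotProduct_sum]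
    _ = -∑ r ∈ range (m + B), ∑ b ∈ range B,
          star (x r) ⬝ᵥ G (r - (m + B + b : ℕ)) *ᵥ x (m + B + b) := by
        rw [← sum_neg_distrib]
        refine sum_congr rfl fun r hr => ?_
        rw [hrow r (mem_range.1 hr), dotProduct_neg, dotProduct_sum]
    _ = _ := by
        rw [sum_range_add, sum_eq_zero fun r hr => sum_eq_zero fun b _ => by
          rw [eq_zero_of_support_subset_Icc hB (by simp at hr; omega), zero_mulVec,
            dotProduct_zero], zero_add]
        refine congrArg _ (sum_congr rfl fun a _ => sum_congr rfl fun b _ => ?_)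
        congr 3
        push_cast
        ring

end Kernel

lemma tendsto_zero_of_summable_sum_norm_sq {ι E : Type*} [Fintype ι] [SeminormedAddCommGroup E]
    {x : ℕ → ι → E} (hx : Summable fun i => ∑ a, ‖x i a‖ ^ 2) : Tendsto x atTop (𝓝 0) := by
  rw [tendsto_zero_iff_norm_tendsto_zero]
  have h := (Real.continuous_sqrt.tendsto 0).comp hx.tendsto_atTop_zero
  rw [Real.sqrt_zero] at h
  refine squeeze_zero (fun _ => norm_nonneg _) (fun i => ?_) h
  refine (pi_norm_le_iff_of_nonneg (Real.sqrt_nonneg _)).2 fun a => Real.le_sqrt_of_sq_le ?_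
  exact single_le_sum (f := fun a => ‖x i a‖ ^ 2) (fun _ _ => sq_nonneg _) (mem_univ a)

lemma tendsto_sum_star_dotProduct_mulVec {n : Type*} [Fintype n] {x : ℕ → n → ℂ}
    (hx : Tendsto x atTop (𝓝 0)) (M : ℕ → ℕ → Matrix n n ℂ) (A B : ℕ) :
    Tendsto (fun m => ∑ a ∈ range A, ∑ b ∈ range A, star (x (m + a)) ⬝ᵥ M a b *ᵥ x (m + B + b))
      atTop (𝓝 0) := by
  rw [← sum_const_zero (s := range A)]
  refine tendsto_finsetSum _ fun a _ => ?_
  rw [← sum_const_zero (s := range A)]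
  refine tendsto_finsetSum _ fun b _ => ?_
  have hc : Continuous fun p : (n → ℂ) × (n → ℂ) => star p.1 ⬝ᵥ M a b *ᵥ p.2 := by fun_prop
  have hu := hx.comp (tendsto_add_atTop_nat a)
  have hw := hx.comp (tendsto_add_atTop_nat (B + b))
  simpa [Function.comp_def, add_assoc] using (hc.tendsto (0, 0)).comp (hu.prodMk_nhds hw)

theorem toeplitz_posdef_symbol_trivial_kernel_general (d : ℕ)
    (G : ℤ → Matrix (Fin d) (Fin d) ℂ)
    (hfin : (Function.support G).Finite)
    (hpos : ∀ k : ℝ, (toeplitzSymbol d G k).PosDef)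
    (x : ℕ → (Fin d → ℂ))
    (hx : Summable fun i : ℕ => ∑ a : Fin d, ‖x i a‖ ^ 2)
    (hker : ∀ i : ℕ, ∑ᶠ j : ℕ, (G ((i : ℤ) - (j : ℤ))).mulVec (x j) = 0) :
    x = 0 := by
  obtain ⟨B, hB⟩ := exists_support_subset_Icc hfin
  obtain ⟨ε, hε, hεG⟩ := exists_pos_mul_re_le_re_dotProduct_mulVec
    (continuous_toeplitzSymbol hfin) isCompact_Icc fun k _ => hpos k
  have hboundary : Tendsto (fun m => -(∑ a ∈ range B, ∑ b ∈ range B,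
      star (x (m + a)) ⬝ᵥ G (a - B - b) *ᵥ x (m + B + b)).re) atTop (𝓝 0) := by
    simpa only [Function.comp_def, zero_re, neg_zero] using
      ((continuous_re.tendsto 0).comp (tendsto_sum_star_dotProduct_mulVec
        (tendsto_zero_of_summable_sum_norm_sq hx) (fun a b => G (a - B - b)) B B)).neg
  funext j
  have hj : ε * ‖WithLp.toLp 2 (x j)‖ ^ 2 ≤ 0 := by
    refine ge_of_tendsto hboundary (eventually_atTop.2 ⟨j + 1, fun m hm => ?_⟩)
    calc ε * ‖WithLp.toLp 2 (x j)‖ ^ 2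
        ≤ ε * ∑ r ∈ range (m + B), (star (x r) ⬝ᵥ x r).re := by
          simp only [re_star_dotProduct_self_eq_norm_sq]
          gcongr
          exact single_le_sum (f := fun r => ‖WithLp.toLp 2 (x r)‖ ^ 2)
            (fun _ _ => sq_nonneg _) (mem_range.2 (by omega))
      _ ≤ (toeplitzSectionForm G x (m + B)).re := mul_sum_re_le_re_toeplitzSectionForm hfin hεG x _
      _ = _ := by rw [toeplitzSectionForm_add_eq_neg hB hker, neg_re]
  have := le_of_mul_le_mul_left (hj.trans (mul_zero ε).ge) hε
  simpa using le_antisymm this (sq_nonneg _)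

/-- No localized zero modes under open boundary conditions: a half-infinite banded
block-Toeplitz operator whose (Hermitian) symbol is positive definite at every
momentum has trivial square-summable kernel. -/
theorem toeplitz_posdef_symbol_trivial_kernel (d : ℕ) (hd : 0 < d)
    (G : ℤ → Matrix (Fin d) (Fin d) ℂ)
    (hfin : (Function.support G).Finite)
    (hherm : ∀ m : ℤ, G (-m) = (G m)ᴴ)
    (hpos : ∀ k : ℝ, (toeplitzSymbol d G k).PosDef)
    (x : ℕ → (Fin d → ℂ))
    (hx : Summable fun i : ℕ => ∑ a : Fin d, ‖x i a‖ ^ 2)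
    (hker : ∀ i : ℕ, ∑ᶠ j : ℕ, (G ((i : ℤ) - (j : ℤ))).mulVec (x j) = 0) :
    x = 0 :=
  toeplitz_posdef_symbol_trivial_kernel_general d G hfin hpos x hx hker
end

section
/- Let N be a positive integer and let H ∈ M_{2N}(ℂ) be Hermitian with τ₁ H* τ₁ = −H (a fermionic BdG Hamiltonian). Then the complex dimension of the kernel of H is even: zero eigenvectors of a fermionic BdG Hamiltonian come in pairs. -/
/-!
Since `H` is Hermitian, `H* = Hᵀ`, and as `τ₁` is a symmetric involution the BdG condition says
that `H τ₁` is skew-symmetric. A skew-symmetric matrix has even rank: on a complement of its kernel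
it induces a nondegenerate skew form, whose Gram matrix `M` satisfies
`det M = det Mᵀ = (-1)^r det M` with `det M ≠ 0`. As `τ₁` is invertible, `rank H = rank (H τ₁)` is
even, hence so is `dim ker H = 2N - rank H`.
-/

open Matrix

open Module

theorem Matrix.even_card_of_transpose_eq_neg {R n : Type*} [CommRing R] [IsDomain R]
    [Fintype n] [DecidableEq n] (hR : ringChar R ≠ 2) {A : Matrix n n R} (hA : Aᵀ = -A)
    (hdet : A.det ≠ 0) : Even (Fintype.card n) := by
  have h : (-1 : R) ^ Fintype.card n * A.det = 1 * A.det := by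
    rw [← det_neg, ← hA, det_transpose, one_mul]
  rw [← neg_one_pow_eq_one_iff_even (Ring.neg_one_ne_one_of_char_ne_two hR)]
  exact mul_right_cancel₀ hdet h

namespace LinearMap.BilinForm

variable {K V : Type*} [Field K] [AddCommGroup V] [Module K V] [FiniteDimensional K V]
  {B : LinearMap.BilinForm K V}

theorem even_finrank_of_nondegenerate (hK : ringChar K ≠ 2) (hB : ∀ x y, B x y = -B y x)
    (hnd : B.Nondegenerate) : Even (finrank K V) := by
  let b := finBasis K V
  have hskew : (toMatrix b B)ᵀ = -toMatrix b B := by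
    ext i j
    simp [toMatrix_apply, hB (b j)]
  simpa using Matrix.even_card_of_transpose_eq_neg hK hskew
    ((nondegenerate_iff_det_ne_zero b).mp hnd)

theorem nondegenerate_restrict_of_isCompl_ker (hB : ∀ x y, B x y = -B y x)
    {W : Submodule K V} (hW : IsCompl W (LinearMap.ker B)) : (B.restrict W).Nondegenerate := by
  rw [nondegenerate_iff_ker_eq_bot, ker_restrict_eq_of_codisjoint hW.codisjoint
    fun x _ y hy => by rw [hB, LinearMap.mem_ker.mp hy, LinearMap.zero_apply, neg_zero]]
  exact Submodule.disjoint_iff_comap_eq_bot.mp hW.disjoint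

theorem even_finrank_range (hK : ringChar K ≠ 2) (hB : ∀ x y, B x y = -B y x) :
    Even (finrank K (LinearMap.range B)) := by
  obtain ⟨W, hW⟩ := (LinearMap.ker B).exists_isCompl
  rw [(B.quotKerEquivRange.symm.trans (Submodule.quotientEquivOfIsCompl _ W hW)).finrank_eq]
  exact even_finrank_of_nondegenerate hK (fun x y => hB x y)
    (nondegenerate_restrict_of_isCompl_ker hB hW.symm)

end LinearMap.BilinForm

namespace Matrix

variable {K n : Type*} [Field K] [Fintype n] [DecidableEq n] {A : Matrix n n K}

theorem toBilin'_apply_swap_of_transpose_eq_neg (hA : Aᵀ = -A) (v w : n → K) :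
    toBilin' A v w = -toBilin' A w v := by
  rw [toBilin'_apply', toBilin'_apply', dotProduct_mulVec, ← mulVec_transpose, hA, neg_mulVec,
    neg_dotProduct, dotProduct_comm]

theorem ker_toBilin'_of_transpose_eq_neg (hA : Aᵀ = -A) :
    LinearMap.ker (toBilin' A) = LinearMap.ker A.mulVecLin := by
  ext v
  simp only [LinearMap.mem_ker, mulVecLin_apply, LinearMap.ext_iff, LinearMap.zero_apply,
    toBilin'_apply', dotProduct_mulVec, ← mulVec_transpose, hA, neg_mulVec,
    dotProduct_eq_zero_iff, neg_eq_zero]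

theorem even_rank_of_transpose_eq_neg (hK : ringChar K ≠ 2) (hA : Aᵀ = -A) : Even A.rank := by
  have hform := (toBilin' A).finrank_range_add_finrank_ker
  have hmatrix := A.mulVecLin.finrank_range_add_finrank_ker
  rw [ker_toBilin'_of_transpose_eq_neg hA] at hform
  have hrank : A.rank = finrank K (LinearMap.range (toBilin' A)) := by
    rw [rank]
    omega
  exact hrank ▸ LinearMap.BilinForm.even_finrank_range hK
    (toBilin'_apply_swap_of_transpose_eq_neg hA)

end Matrix

theorem Matrix.IsHermitian.map_conj_eq_transpose {n : Type*} {H : Matrix n n ℂ}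
    (hH : H.IsHermitian) : H.map (starRingEnd ℂ) = Hᵀ := by
  conv_rhs => rw [← hH]
  rfl

theorem tau1_mul_self (N : ℕ) : tau1 N * tau1 N = 1 := by
  simp [tau1, fromBlocks_multiply, fromBlocks_one]

theorem tau1_transpose (N : ℕ) : (tau1 N)ᵀ = tau1 N := by
  simp [tau1, fromBlocks_transpose]

theorem transpose_mul_tau1_eq_neg {N : ℕ} {H : Matrix (Fin N ⊕ Fin N) (Fin N ⊕ Fin N) ℂ}
    (hherm : H.IsHermitian) (hferm : tau1 N * H.map (starRingEnd ℂ) * tau1 N = -H) :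
    (H * tau1 N)ᵀ = -(H * tau1 N) := by
  rw [transpose_mul, tau1_transpose, ← hherm.map_conj_eq_transpose, ← neg_mul, ← hferm,
    mul_assoc _ (tau1 N), tau1_mul_self, mul_one]

theorem fermionic_BdG_kernel_even_dim_general (N : ℕ)
    (H : Matrix (Fin N ⊕ Fin N) (Fin N ⊕ Fin N) ℂ)
    (hherm : H.IsHermitian)
    (hferm : tau1 N * H.map (starRingEnd ℂ) * tau1 N = -H) :
    Even (Module.finrank ℂ (LinearMap.ker H.mulVecLin)) := by
  have hrank : Even H.rank := by
    rw [← rank_mul_eq_left_of_isUnit_det _ H (isUnit_det_of_right_inverse (tau1_mul_self N))]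
    exact even_rank_of_transpose_eq_neg (by simp) (transpose_mul_tau1_eq_neg hherm hferm)
  have hdim : H.rank + finrank ℂ (LinearMap.ker H.mulVecLin) = N + N := by
    simpa [rank] using H.mulVecLin.finrank_range_add_finrank_ker
  exact (Nat.even_add.mp (hdim ▸ ⟨N, rfl⟩)).mp hrank

/-- Zero eigenvectors of a fermionic BdG Hamiltonian come in pairs: the complex
dimension of the kernel of a Hermitian matrix `H` with `τ₁ H* τ₁ = -H` is even. -/
theorem fermionic_BdG_kernel_even_dim (N : ℕ) (hN : 0 < N)
    (H : Matrix (Fin N ⊕ Fin N) (Fin N ⊕ Fin N) ℂ)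
    (hherm : H.IsHermitian)
    (hferm : tau1 N * H.map (starRingEnd ℂ) * tau1 N = -H) :
    Even (Module.finrank ℂ (LinearMap.ker H.mulVecLin)) :=
  fermionic_BdG_kernel_even_dim_general N H hherm hferm
end

section
/- Let N be a positive integer and let H ∈ M_{2N}(ℂ) be Hermitian and positive semidefinite. Then every eigenvalue of the (generally non-Hermitian) matrix τ₃H is real: the spectrum of the effective BdG Hamiltonian of a stable free-boson system is purely real. -/
open Matrix
open scoped ComplexOrder

/-- `τ₃ = σ₃ ⊗ 1_N`, the 2N×2N matrix with block form [[1, 0],[0, -1]]. -/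
noncomputable def tau3 (N : ℕ) : Matrix (Fin N ⊕ Fin N) (Fin N ⊕ Fin N) ℂ :=
  Matrix.fromBlocks 1 0 0 (-1)

lemma tau3_isHermitian (N : ℕ) : (tau3 N).IsHermitian := by
  unfold tau3
  rw [Matrix.IsHermitian, fromBlocks_conjTranspose]
  simp [Matrix.IsHermitian]

lemma quad_real {n : Type*} [Fintype n] {A : Matrix n n ℂ} (hA : A.IsHermitian)
    (x : n → ℂ) : (star x ⬝ᵥ A *ᵥ x).im = 0 := by
  rw [← Complex.conj_eq_iff_im]
  calc (starRingEnd ℂ) (star x ⬝ᵥ A *ᵥ x)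
      = star (star x ⬝ᵥ A *ᵥ x) := rfl
    _ = star (A *ᵥ x) ⬝ᵥ x := by rw [star_dotProduct, star_star]
    _ = (star x ᵥ* Aᴴ) ⬝ᵥ x := by rw [star_mulVec]
    _ = star x ⬝ᵥ Aᴴ *ᵥ x := (dotProduct_mulVec _ _ _).symm
    _ = star x ⬝ᵥ A *ᵥ x := by rw [hA.eq]

/-- The spectrum of the effective BdG Hamiltonian `τ₃H` of a stable free-boson
system (`H` Hermitian positive semidefinite) is purely real. -/
theorem stable_boson_BdG_real_spectrum (N : ℕ) (hN : 0 < N)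
    (H : Matrix (Fin N ⊕ Fin N) (Fin N ⊕ Fin N) ℂ)
    (hpsd : H.PosSemidef) :
    ∀ lam : ℂ, (∃ v : Fin N ⊕ Fin N → ℂ, v ≠ 0 ∧ (tau3 N * H).mulVec v = lam • v) →
      lam.im = 0 := by
  rintro lam ⟨v, hv, heig⟩
  set c : ℂ := star v ⬝ᵥ H *ᵥ v with hc
  by_cases hc0 : c = 0
  · -- then H v = 0, so lam • v = 0, so lam = 0
    have hHv : H *ᵥ v = 0 := (hpsd.dotProduct_mulVec_zero_iff v).mp hc0
    have : lam • v = 0 := by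
      rw [← heig, ← mulVec_mulVec, hHv, mulVec_zero]
    rcases smul_eq_zero.mp this with h | h
    · simp [h]
    · exact absurd h hv
  · -- c is real and positive; lam * c is real
    have hcim : c.im = 0 := quad_real hpsd.1 v
    have herm : (H * tau3 N * H).IsHermitian := by
      have : (H * tau3 N * H)ᴴ = H * tau3 N * H := by
        rw [conjTranspose_mul, conjTranspose_mul, hpsd.1.eq, (tau3_isHermitian N).eq,
          Matrix.mul_assoc]
      exact this
    have key : star v ⬝ᵥ (H * tau3 N * H) *ᵥ v = lam * c := by
      have : (H * tau3 N * H) *ᵥ v = lam • (H *ᵥ v) := by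
        rw [Matrix.mul_assoc, ← mulVec_mulVec, heig, mulVec_smul]
      rw [this, dotProduct_smul, hc, smul_eq_mul]
    have him : (lam * c).im = 0 := key ▸ quad_real herm v
    have hcre : c.re ≠ 0 := by
      intro h
      exact hc0 (Complex.ext h hcim)
    have : lam.im * c.re = 0 := by
      have := him
      rw [Complex.mul_im, hcim, mul_zero, zero_add] at this
      linarith [this]
    rcases mul_eq_zero.mp this with h | h
    · exact h
    · exact absurd h hcre
end

section
/- Let N be a positive integer and let H ∈ M_{2N}(ℂ) be Hermitian and positive semidefinite. Then ker((τ₃H)³) = ker((τ₃H)²): the Jordan blocks of the effective BdG Hamiltonian τ₃H at the zero eigenvalue have size at most two. -/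
open Matrix
open scoped ComplexOrder

/-!
Write `A = T H` with `T` Hermitian and invertible and `H` positive semidefinite. If `A³ x = 0`,
cancelling `T` gives `H T H T H x = 0`; pairing with `x` turns this into `v⋆ H v = 0` for
`v = T H x`, so `H v = 0` by positivity, i.e. `A² x = T H v = 0`.
-/

lemma tau3_mul_self (N : ℕ) : tau3 N * tau3 N = 1 := by
  simp [tau3, fromBlocks_multiply, ← fromBlocks_one]

lemma isUnit_tau3 (N : ℕ) : IsUnit (tau3 N) :=
  IsUnit.of_mul_eq_one _ (tau3_mul_self N)

section

variable {n 𝕜 : Type*} [Fintype n] [RCLike 𝕜]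

lemma star_mulVec_dotProduct {m : Type*} [Fintype m] (A : Matrix m n 𝕜) (x : n → 𝕜)
    (y : m → 𝕜) :
    star (A *ᵥ x) ⬝ᵥ y = star x ⬝ᵥ Aᴴ *ᵥ y := by
  rw [star_mulVec, dotProduct_mulVec]

lemma Matrix.PosSemidef.mulVec_mul_mulVec_eq_zero {T H : Matrix n n 𝕜} (hT : T.IsHermitian)
    (hH : H.PosSemidef) {x : n → 𝕜} (h : H *ᵥ T *ᵥ H *ᵥ T *ᵥ H *ᵥ x = 0) :
    H *ᵥ T *ᵥ H *ᵥ x = 0 := by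
  rw [← hH.dotProduct_mulVec_zero_iff]
  calc star (T *ᵥ H *ᵥ x) ⬝ᵥ H *ᵥ T *ᵥ H *ᵥ x
      = star x ⬝ᵥ H *ᵥ T *ᵥ H *ᵥ T *ᵥ H *ᵥ x := by
        rw [star_mulVec_dotProduct, star_mulVec_dotProduct, hT.eq, hH.1.eq]
    _ = 0 := by rw [h, dotProduct_zero]

theorem ker_pow_three_eq_ker_pow_two_of_posSemidef [DecidableEq n] {T H : Matrix n n 𝕜}
    (hT : T.IsHermitian) (hTu : IsUnit T) (hH : H.PosSemidef) :
    LinearMap.ker ((T * H) ^ 3).mulVecLin = LinearMap.ker ((T * H) ^ 2).mulVecLin := by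
  ext x
  simp only [LinearMap.mem_ker, mulVecLin_apply, pow_succ', pow_zero, mul_one,
    ← mulVec_mulVec]
  refine ⟨fun h ↦ ?_, fun h ↦ by rw [h, mulVec_zero, mulVec_zero]⟩
  have hcancel := mulVec_injective_of_isUnit hTu (h.trans (mulVec_zero T).symm)
  rw [hH.mulVec_mul_mulVec_eq_zero hT hcancel, mulVec_zero]

end

theorem stable_boson_zero_jordan_blocks_size_le_two_general (N : ℕ)
    (H : Matrix (Fin N ⊕ Fin N) (Fin N ⊕ Fin N) ℂ)
    (hpsd : H.PosSemidef) :
    LinearMap.ker ((tau3 N * H) ^ 3).mulVecLin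
      = LinearMap.ker ((tau3 N * H) ^ 2).mulVecLin :=
  ker_pow_three_eq_ker_pow_two_of_posSemidef (tau3_isHermitian N) (isUnit_tau3 N) hpsd

/-- The Jordan blocks of the effective BdG Hamiltonian `τ₃H` of a stable
free-boson system at the zero eigenvalue have size at most two:
`ker((τ₃H)³) = ker((τ₃H)²)`. -/
theorem stable_boson_zero_jordan_blocks_size_le_two (N : ℕ) (hN : 0 < N)
    (H : Matrix (Fin N ⊕ Fin N) (Fin N ⊕ Fin N) ℂ)
    (hpsd : H.PosSemidef) :
    LinearMap.ker ((tau3 N * H) ^ 3).mulVecLin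
      = LinearMap.ker ((tau3 N * H) ^ 2).mulVecLin :=
  stable_boson_zero_jordan_blocks_size_le_two_general N H hpsd
end

section
/- Let N be a positive integer and let H ∈ M_{2N}(ℂ) be Hermitian, positive definite, and satisfy the bosonic constraint τ₁ H* τ₁ = H. Then there exist real numbers ε₁, …, ε_N > 0 and vectors ψ₁⁺, …, ψ_N⁺ ∈ ℂ^{2N} such that, setting ψ_n⁻ := τ₁(ψ_n⁺)*, the following hold for all m, n ∈ {1, …, N}: τ₃H ψ_n^± = ±ε_n ψ_n^±; the τ₃-orthonormality relations (ψ_m^±)ᴴ τ₃ ψ_n^± = ±δ_{mn} and (ψ_m^±)ᴴ τ₃ ψ_n^∓ = 0; and the completeness relation Σ_{n=1}^N (ψ_n⁺(ψ_n⁺)ᴴ − ψ_n⁻(ψ_n⁻)ᴴ) τ₃ = 1_{2N}. This is the Bogoliubov diagonalization of a gapped stable quadratic bosonic Hamiltonian. -/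
/-!
Let `K = √H`; by uniqueness of the positive square root it inherits the bosonic symmetry
`τ₁ K̄ τ₁ = K`. Then `τ₃H = K⁻¹ M K` with `M = K τ₃ K` Hermitian and invertible, and
`τ₁ M̄ τ₁ = -M`, so `x ↦ τ₁ x̄` maps eigenvectors of `M` antiunitarily to eigenvectors with the
opposite eigenvalue. An orthonormal family has at most `2N` members, so `M` has exactly `N`
positive eigenvalues `εₙ`, with an orthonormal eigenbasis `φₙ, τ₁ φ̄ₙ`. The vectors
`ψₙ± = √εₙ K⁻¹ φₙ±` are eigenvectors of `τ₃H`; since `K⁻¹ τ₃ K⁻¹ = M⁻¹`, their `τ₃`-products are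
`εₙ / (±εₙ) δₘₙ`, and the completeness relation is the resolution of the identity
`∑ φ φᴴ = 1` conjugated by `K`.
-/

open Matrix
open scoped ComplexOrder

open scoped MatrixOrder

section Tau

variable (N : ℕ)

theorem tau1_mul_tau1 : tau1 N * tau1 N = 1 := by
  simp [tau1, fromBlocks_multiply, ← fromBlocks_one]

theorem tau3_mul_tau3 : tau3 N * tau3 N = 1 := by
  simp [tau3, fromBlocks_multiply, ← fromBlocks_one]

theorem conjTranspose_tau1 : (tau1 N)ᴴ = tau1 N := by
  simp [tau1, fromBlocks_conjTranspose]

theorem isHermitian_tau3 : (tau3 N).IsHermitian := by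
  simp [IsHermitian, tau3, fromBlocks_conjTranspose]

theorem tau1_mul_map_tau3 :
    tau1 N * (tau3 N).map (starRingEnd ℂ) = -tau3 N * tau1 N := by
  simp [tau1, tau3, fromBlocks_map, fromBlocks_multiply, fromBlocks_neg, Matrix.map_neg]

end Tau

theorem Real.abs_mul_inv_eq_sign (c : ℝ) : |c| * c⁻¹ = Real.sign c := by
  rcases lt_trichotomy c 0 with h | rfl | h
  · simp [h, abs_of_neg, ne_of_lt h, Real.sign_of_neg]
  · simp [Real.sign_zero]
  · simp [h, abs_of_pos, ne_of_gt h, Real.sign_of_pos]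

theorem Real.sign_mul_abs (c : ℝ) : Real.sign c * |c| = c := by
  rcases lt_trichotomy c 0 with h | rfl | h
  · simp [abs_of_neg h, Real.sign_of_neg h]
  · simp [Real.sign_zero]
  · simp [abs_of_pos h, Real.sign_of_pos h]

/- A hypothesis `C * A.map (starRingEnd ℂ) = B * C` says that the antilinear map `x ↦ C *ᵥ star x`
intertwines `A` with `B`; for `C = τ₁` this is the bosonic (particle-hole) symmetry. -/

section Conjugation

variable {ι : Type*} [Fintype ι]

theorem star_mulVec_eq_map_mulVec_star (A : Matrix ι ι ℂ) (x : ι → ℂ) :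
    star (A *ᵥ x) = A.map (starRingEnd ℂ) *ᵥ star x :=
  funext fun i => RingHom.map_mulVec (starRingEnd ℂ) A x i

theorem star_mulVec_star_dotProduct_mulVec_star [DecidableEq ι] {C : Matrix ι ι ℂ}
    (hC : Cᴴ * C = 1) (x y : ι → ℂ) : star (C *ᵥ star x) ⬝ᵥ (C *ᵥ star y) = star y ⬝ᵥ x := by
  rw [star_mulVec, dotProduct_mulVec, vecMul_vecMul, hC, vecMul_one, star_star, dotProduct_comm]

variable {A B C : Matrix ι ι ℂ}

theorem mulVec_star_mulVec_of_mul_map (h : C * A.map (starRingEnd ℂ) = B * C) (x : ι → ℂ) :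
    C *ᵥ star (A *ᵥ x) = B *ᵥ (C *ᵥ star x) := by
  rw [star_mulVec_eq_map_mulVec_star, mulVec_mulVec, h, ← mulVec_mulVec]

theorem mulVec_mulVec_star_of_mulVec_eq_smul (hCA : C * A.map (starRingEnd ℂ) = -A * C)
    {x : ι → ℂ} {a : ℝ} (hx : A *ᵥ x = (a : ℂ) • x) :
    A *ᵥ (C *ᵥ star x) = ((-a : ℝ) : ℂ) • (C *ᵥ star x) := by
  have h := mulVec_star_mulVec_of_mul_map hCA x
  rw [hx, star_smul, Complex.star_def, Complex.conj_ofReal, mulVec_smul, neg_mulVec] at h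
  rw [Complex.ofReal_neg, neg_smul, h, neg_neg]

theorem mul_map_mul_of_mul_map {A' B' : Matrix ι ι ℂ} (hA : C * A.map (starRingEnd ℂ) = A' * C)
    (hB : C * B.map (starRingEnd ℂ) = B' * C) :
    C * (A * B).map (starRingEnd ℂ) = A' * B' * C := by
  rw [Matrix.map_mul, ← mul_assoc, hA, mul_assoc, hB, mul_assoc]

theorem mulVec_star_inv_mulVec_of_mul_map [DecidableEq ι] (hA : IsUnit A.det)
    (h : C * A.map (starRingEnd ℂ) = A * C) (x : ι → ℂ) :
    C *ᵥ star (A⁻¹ *ᵥ x) = A⁻¹ *ᵥ (C *ᵥ star x) := by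
  have hx : x = A *ᵥ (A⁻¹ *ᵥ x) := by rw [mulVec_mulVec, mul_nonsing_inv _ hA, one_mulVec]
  conv_rhs => rw [hx, mulVec_star_mulVec_of_mul_map h, mulVec_mulVec, nonsing_inv_mul _ hA,
    one_mulVec]

theorem mul_map_sqrt_of_mul_map_mul [DecidableEq ι] {H : Matrix ι ι ℂ} (hC : Cᴴ * C = 1)
    (hH : 0 ≤ H) (hCH : C * H.map (starRingEnd ℂ) * Cᴴ = H) :
    C * (CFC.sqrt H).map (starRingEnd ℂ) = CFC.sqrt H * C := by
  set K := CFC.sqrt H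
  have hK : K.PosSemidef := Matrix.nonneg_iff_posSemidef.mp (CFC.sqrt_nonneg H)
  have hKt : K.map (starRingEnd ℂ) = Kᵀ := by
    ext i j
    simpa using congr_fun (congr_fun hK.1.eq j) i
  have hsq : C * K.map (starRingEnd ℂ) * Cᴴ * (C * K.map (starRingEnd ℂ) * Cᴴ) = H := by
    rw [← hCH, ← CFC.sqrt_mul_sqrt_self H hH, Matrix.map_mul]
    simp only [mul_assoc]
    rw [← mul_assoc Cᴴ, hC, one_mul]
  have hnonneg : 0 ≤ C * K.map (starRingEnd ℂ) * Cᴴ := by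
    rw [Matrix.nonneg_iff_posSemidef, hKt]
    simpa using hK.transpose.conjTranspose_mul_mul_same Cᴴ
  have hKeq : K = C * K.map (starRingEnd ℂ) * Cᴴ := CFC.sqrt_unique hsq hnonneg
  conv_rhs => rw [hKeq, mul_assoc, hC, mul_one]

end Conjugation

/-- `Orthonormal` needs an inner product space; this is the same notion on plain `ι → ℂ`. -/
def DotOrthonormal {κ ι : Type*} [Fintype ι] [DecidableEq κ] (u : κ → ι → ℂ) : Prop :=
  ∀ i j, star (u i) ⬝ᵥ u j = if i = j then 1 else 0

section Orthonormal

variable {κ ι : Type*} [Fintype ι] [DecidableEq κ] {u : κ → ι → ℂ}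

theorem DotOrthonormal.card_le [Fintype κ] (hu : DotOrthonormal u) :
    Fintype.card κ ≤ Fintype.card ι := by
  have : Orthonormal ℂ fun k => WithLp.toLp 2 (u k) := by
    rw [orthonormal_iff_ite]
    intro i j
    rw [EuclideanSpace.inner_toLp_toLp, dotProduct_comm, hu]
  simpa using this.linearIndependent.fintype_card_le_finrank

theorem DotOrthonormal.comp (hu : DotOrthonormal u) {κ' : Type*} [DecidableEq κ'] {f : κ' → κ}
    (hf : Function.Injective f) : DotOrthonormal (u ∘ f) := by
  intro i j
  simp [hu (f i) (f j), hf.eq_iff]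

theorem DotOrthonormal.sum_vecMulVec_eq_one [Fintype κ] [DecidableEq ι] (hu : DotOrthonormal u)
    (hcard : Fintype.card κ = Fintype.card ι) :
    ∑ k, vecMulVec (u k) (star (u k)) = 1 := by
  let U : Matrix ι κ ℂ := of fun a k => u k a
  have hUU : Uᴴ * U = 1 := by
    ext k l
    simpa [U, mul_apply, one_apply, dotProduct, mul_comm] using hu k l
  rw [← (mul_eq_one_comm_of_equiv (Fintype.equivOfCardEq hcard)).mp hUU]
  ext a b
  simp [U, mul_apply, vecMulVec_apply, Matrix.sum_apply]

theorem Matrix.IsHermitian.star_dotProduct_eq_zero_of_mulVec_eq_smul {M : Matrix ι ι ℂ}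
    (hM : M.IsHermitian) {x y : ι → ℂ} {a b : ℝ} (hx : M *ᵥ x = (a : ℂ) • x)
    (hy : M *ᵥ y = (b : ℂ) • y) (hab : a ≠ b) : star x ⬝ᵥ y = 0 := by
  have h : (a : ℂ) * (star x ⬝ᵥ y) = b * (star x ⬝ᵥ y) := by
    calc (a : ℂ) * (star x ⬝ᵥ y) = star (M *ᵥ x) ⬝ᵥ y := by
          rw [hx, star_smul, smul_dotProduct, Complex.star_def, Complex.conj_ofReal, smul_eq_mul]
      _ = star x ⬝ᵥ (M *ᵥ y) := by rw [star_mulVec, ← dotProduct_mulVec, hM.eq]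
      _ = b * (star x ⬝ᵥ y) := by rw [hy, dotProduct_smul, smul_eq_mul]
  exact (mul_eq_mul_right_iff.mp h).resolve_left (mod_cast hab)

end Orthonormal

theorem card_pos_eq_of_two_mul_card_le {ι : Type*} [Fintype ι] {N : ℕ}
    (hcard : Fintype.card ι = N + N) {μ : ι → ℝ} (hμ : ∀ i, μ i ≠ 0)
    (hpos : 2 * Fintype.card {i // 0 < μ i} ≤ Fintype.card ι)
    (hneg : 2 * Fintype.card {i // 0 < -μ i} ≤ Fintype.card ι) :
    Fintype.card {i // 0 < μ i} = N := by
  have hsplit : Fintype.card {i // 0 < -μ i} = Fintype.card {i // ¬ 0 < μ i} :=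
    Fintype.card_congr <| Equiv.subtypeEquivRight fun i => by
      rw [neg_pos, not_lt]
      exact ⟨le_of_lt, fun h => lt_of_le_of_ne h (hμ i)⟩
  have := Fintype.card_subtype_compl (fun i => 0 < μ i)
  have := Fintype.card_subtype_le (fun i => 0 < μ i)
  omega

section ParticleHole

variable {κ ι : Type*} [Fintype ι] [DecidableEq ι] [DecidableEq κ] {M C : Matrix ι ι ℂ}

theorem DotOrthonormal.sum_elim_mulVec_star (hM : M.IsHermitian) (hC : Cᴴ * C = 1)
    (hCM : C * M.map (starRingEnd ℂ) = -M * C) {φ : κ → ι → ℂ} (hφ : DotOrthonormal φ)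
    {ε : κ → ℝ} (hε : ∀ k, 0 < ε k) (hMφ : ∀ k, M *ᵥ φ k = (ε k : ℂ) • φ k) :
    DotOrthonormal (Sum.elim φ fun k => C *ᵥ star (φ k)) := by
  rintro (k | k) (l | l)
  · simpa using hφ k l
  · simpa using hM.star_dotProduct_eq_zero_of_mulVec_eq_smul (hMφ k)
      (mulVec_mulVec_star_of_mulVec_eq_smul hCM (hMφ l)) (by linarith [hε k, hε l])
  · simpa using hM.star_dotProduct_eq_zero_of_mulVec_eq_smul
      (mulVec_mulVec_star_of_mulVec_eq_smul hCM (hMφ k)) (hMφ l) (by linarith [hε k, hε l])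
  · simp [star_mulVec_star_dotProduct_mulVec_star hC, hφ l k, eq_comm]

theorem two_mul_card_pos_le (hM : M.IsHermitian) (hC : Cᴴ * C = 1)
    (hCM : C * M.map (starRingEnd ℂ) = -M * C) {v : ι → ι → ℂ} (hv : DotOrthonormal v)
    {μ : ι → ℝ} (hvμ : ∀ i, M *ᵥ v i = (μ i : ℂ) • v i) :
    2 * Fintype.card {i // 0 < μ i} ≤ Fintype.card ι := by
  simpa [two_mul] using ((hv.comp Subtype.val_injective).sum_elim_mulVec_star hM hC hCM
    (ε := μ ∘ Subtype.val) (fun i : {i // 0 < μ i} => i.2) fun i => hvμ i.1).card_le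

theorem exists_pos_eigenvectors {N : ℕ} (hcard : Fintype.card ι = N + N) (hM : M.IsHermitian)
    (hMu : IsUnit M) (hC : Cᴴ * C = 1) (hCM : C * M.map (starRingEnd ℂ) = -M * C) :
    ∃ (ε : Fin N → ℝ) (φ : Fin N → ι → ℂ), (∀ n, 0 < ε n) ∧
      (∀ n, M *ᵥ φ n = (ε n : ℂ) • φ n) ∧ DotOrthonormal (Sum.elim φ fun n => C *ᵥ star (φ n)) := by
  set μ := hM.eigenvalues
  set v : ι → ι → ℂ := fun i => hM.eigenvectorBasis i
  have hv : DotOrthonormal v := fun i j => by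
    rw [dotProduct_comm, ← EuclideanSpace.inner_eq_star_dotProduct]
    exact orthonormal_iff_ite.mp hM.eigenvectorBasis.orthonormal i j
  have hvμ : ∀ i, M *ᵥ v i = (μ i : ℂ) • v i := fun i => by
    simp [v, μ, hM.mulVec_eigenvectorBasis, Complex.coe_smul]
  have hμ : ∀ i, μ i ≠ 0 := fun i => by
    show hM.eigenvalues i ≠ 0
    have hdet := ((isUnit_iff_isUnit_det M).mp hMu).ne_zero
    rw [hM.det_eq_prod_eigenvalues] at hdet
    simpa using Finset.prod_ne_zero_iff.mp hdet i (Finset.mem_univ i)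
  have hCM' : C * (-M).map (starRingEnd ℂ) = -(-M) * C := by
    rw [Matrix.map_neg _ (map_neg _), mul_neg, hCM]
    simp only [neg_mul, neg_neg]
  have hneg := two_mul_card_pos_le hM.neg hC hCM' hv (μ := -μ) fun i => by
    rw [neg_mulVec, hvμ, Pi.neg_apply, Complex.ofReal_neg, neg_smul]
  have hcount := card_pos_eq_of_two_mul_card_le hcard hμ (two_mul_card_pos_le hM hC hCM hv hvμ)
    (by simpa using hneg)
  let e : Fin N ≃ {i // 0 < μ i} := (Fintype.equivFinOfCardEq hcount).symm
  exact ⟨fun n => μ (e n), fun n => v (e n), fun n => (e n).2, fun n => hvμ (e n),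
    (hv.comp (Subtype.val_injective.comp e.injective)).sum_elim_mulVec_star hM hC hCM
      (fun n => (e n).2) fun n => hvμ (e n)⟩

theorem exists_pos_eigenvectors_mul_mul {N : ℕ} (hcard : Fintype.card ι = N + N)
    {K T : Matrix ι ι ℂ} (hKh : K.IsHermitian) (hK : IsUnit K.det) (hTh : T.IsHermitian)
    (hT : T * T = 1) (hC : Cᴴ * C = 1) (hCK : C * K.map (starRingEnd ℂ) = K * C)
    (hCT : C * T.map (starRingEnd ℂ) = -T * C) :
    ∃ (ε : Fin N → ℝ) (φ : Fin N → ι → ℂ), (∀ n, 0 < ε n) ∧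
      DotOrthonormal (Sum.elim φ fun n => C *ᵥ star (φ n)) ∧
      ∀ i, (K * T * K) *ᵥ Sum.elim φ (fun n => C *ᵥ star (φ n)) i =
        ((Sum.elim ε (-ε) i : ℝ) : ℂ) • Sum.elim φ (fun n => C *ᵥ star (φ n)) i := by
  have hM : (K * T * K).IsHermitian := by
    simpa [hKh.eq] using isHermitian_conjTranspose_mul_mul K hTh
  have hMu : IsUnit (K * T * K) := by
    have hKu := (isUnit_iff_isUnit_det K).mpr hK
    exact (hKu.mul (IsUnit.of_mul_eq_one _ hT)).mul hKu
  have hCM : C * (K * T * K).map (starRingEnd ℂ) = -(K * T * K) * C := by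
    rw [mul_map_mul_of_mul_map (mul_map_mul_of_mul_map hCK hCT) hCK]
    simp
  obtain ⟨ε, φ, hε, hφ, hu⟩ := exists_pos_eigenvectors hcard hM hMu hC hCM
  refine ⟨ε, φ, hε, hu, ?_⟩
  rintro (n | n)
  exacts [hφ n, mulVec_mulVec_star_of_mulVec_eq_smul hCM (hφ n)]

end ParticleHole

section Bogoliubov

variable {ι : Type*} [Fintype ι] [DecidableEq ι] {K T : Matrix ι ι ℂ}

theorem smul_inv_mulVec_of_mulVec_eq_smul (hK : IsUnit K.det) {x : ι → ℂ} {c : ℂ}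
    (hx : (K * T * K) *ᵥ x = c • x) : c • (K⁻¹ *ᵥ x) = T *ᵥ (K *ᵥ x) := by
  rw [← mulVec_smul, ← hx, mulVec_mulVec, mulVec_mulVec, ← mul_assoc, ← mul_assoc,
    nonsing_inv_mul _ hK, one_mul]

theorem smul_mulVec_inv_mulVec_of_mulVec_eq_smul (hK : IsUnit K.det) (hT : T * T = 1)
    {x : ι → ℂ} {c : ℂ} (hx : (K * T * K) *ᵥ x = c • x) :
    c • (T *ᵥ (K⁻¹ *ᵥ x)) = K *ᵥ x := by
  rw [← mulVec_smul, smul_inv_mulVec_of_mulVec_eq_smul hK hx, mulVec_mulVec, hT, one_mulVec]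

theorem mulVec_inv_mulVec_of_mulVec_eq_smul (hK : IsUnit K.det) {x : ι → ℂ} {c : ℂ}
    (hx : (K * T * K) *ᵥ x = c • x) : (T * (K * K)) *ᵥ (K⁻¹ *ᵥ x) = c • (K⁻¹ *ᵥ x) := by
  rw [smul_inv_mulVec_of_mulVec_eq_smul hK hx, mulVec_mulVec, mulVec_mulVec, mul_assoc, mul_assoc,
    mul_nonsing_inv _ hK, mul_one]

theorem mul_star_inv_mulVec_dotProduct_of_mulVec_eq_smul (hK : IsUnit K.det)
    (hKh : K.IsHermitian) (hT : T * T = 1) {y : ι → ℂ} {c : ℂ} (hy : (K * T * K) *ᵥ y = c • y)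
    (x : ι → ℂ) : c * (star (K⁻¹ *ᵥ x) ⬝ᵥ (T *ᵥ (K⁻¹ *ᵥ y))) = star x ⬝ᵥ y := by
  rw [← smul_eq_mul, ← dotProduct_smul, smul_mulVec_inv_mulVec_of_mulVec_eq_smul hK hT hy,
    star_mulVec, ← dotProduct_mulVec, mulVec_mulVec, conjTranspose_nonsing_inv, hKh.eq,
    nonsing_inv_mul _ hK, one_mulVec]

theorem smul_vecMulVec_inv_mulVec_mul_of_mulVec_eq_smul (hK : IsUnit K.det)
    (hKh : K.IsHermitian) (hT : T * T = 1) (hTh : T.IsHermitian) {x : ι → ℂ} {c : ℝ}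
    (hx : (K * T * K) *ᵥ x = (c : ℂ) • x) :
    (c : ℂ) • (vecMulVec (K⁻¹ *ᵥ x) (star (K⁻¹ *ᵥ x)) * T) = K⁻¹ * vecMulVec x (star x) * K := by
  have hstar : (c : ℂ) • (star (K⁻¹ *ᵥ x) ᵥ* T) = star (K *ᵥ x) := by
    rw [← smul_mulVec_inv_mulVec_of_mulVec_eq_smul hK hT hx, star_smul, star_mulVec T, hTh.eq,
      Complex.star_def, Complex.conj_ofReal]
  rw [vecMulVec_mul, ← vecMulVec_smul, hstar, star_mulVec, ← vecMulVec_mul, ← mul_vecMulVec,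
    hKh.eq, mul_assoc]

noncomputable def bogoliubovVector (K : Matrix ι ι ℂ) (c : ℝ) (x : ι → ℂ) : ι → ℂ :=
  (Real.sqrt |c| : ℂ) • (K⁻¹ *ᵥ x)

theorem bogoliubovVector_neg (K : Matrix ι ι ℂ) (c : ℝ) (x : ι → ℂ) :
    bogoliubovVector K (-c) x = bogoliubovVector K c x := by
  rw [bogoliubovVector, bogoliubovVector, abs_neg]

theorem mulVec_bogoliubovVector (hK : IsUnit K.det) {x : ι → ℂ} {c : ℝ}
    (hx : (K * T * K) *ᵥ x = (c : ℂ) • x) :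
    (T * (K * K)) *ᵥ bogoliubovVector K c x = (c : ℂ) • bogoliubovVector K c x := by
  rw [bogoliubovVector, mulVec_smul, mulVec_inv_mulVec_of_mulVec_eq_smul hK hx, smul_comm]

theorem mulVec_star_bogoliubovVector {C : Matrix ι ι ℂ} (hK : IsUnit K.det)
    (hCK : C * K.map (starRingEnd ℂ) = K * C) (c : ℝ) (x : ι → ℂ) :
    C *ᵥ star (bogoliubovVector K c x) = bogoliubovVector K c (C *ᵥ star x) := by
  rw [bogoliubovVector, bogoliubovVector, star_smul, mulVec_smul,
    mulVec_star_inv_mulVec_of_mul_map hK hCK, Complex.star_def, Complex.conj_ofReal]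

variable {κ : Type*} [DecidableEq κ] {u : κ → ι → ℂ} {c : κ → ℝ}

theorem DotOrthonormal.star_bogoliubovVector_dotProduct (hu : DotOrthonormal u)
    (hK : IsUnit K.det) (hKh : K.IsHermitian) (hT : T * T = 1) (hc : ∀ i, c i ≠ 0)
    (huc : ∀ i, (K * T * K) *ᵥ u i = (c i : ℂ) • u i) (i j : κ) :
    star (bogoliubovVector K (c i) (u i)) ⬝ᵥ (T *ᵥ bogoliubovVector K (c j) (u j)) =
      if i = j then (Real.sign (c i) : ℂ) else 0 := by
  have h := mul_star_inv_mulVec_dotProduct_of_mulVec_eq_smul hK hKh hT (huc j) (u i)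
  rw [hu i j, ← eq_inv_mul_iff_mul_eq₀ (mod_cast hc j)] at h
  simp only [bogoliubovVector, star_smul, mulVec_smul, smul_dotProduct, dotProduct_smul, h,
    Complex.star_def, Complex.conj_ofReal, smul_eq_mul]
  split_ifs with hij
  · subst hij
    rw [mul_one, ← mul_assoc, ← Complex.ofReal_mul, Real.mul_self_sqrt (abs_nonneg _)]
    exact_mod_cast Real.abs_mul_inv_eq_sign (c i)
  · simp

theorem DotOrthonormal.sum_sign_smul_vecMulVec_bogoliubovVector_mul [Fintype κ]
    (hu : DotOrthonormal u)
    (hcard : Fintype.card κ = Fintype.card ι) (hK : IsUnit K.det) (hKh : K.IsHermitian)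
    (hT : T * T = 1) (hTh : T.IsHermitian) (huc : ∀ i, (K * T * K) *ᵥ u i = (c i : ℂ) • u i) :
    (∑ i, (Real.sign (c i) : ℂ) •
      vecMulVec (bogoliubovVector K (c i) (u i)) (star (bogoliubovVector K (c i) (u i)))) * T =
      1 := by
  have hterm : ∀ i, (Real.sign (c i) : ℂ) • vecMulVec (bogoliubovVector K (c i) (u i))
      (star (bogoliubovVector K (c i) (u i))) * T = K⁻¹ * vecMulVec (u i) (star (u i)) * K := by
    intro i
    rw [← smul_vecMulVec_inv_mulVec_mul_of_mulVec_eq_smul hK hKh hT hTh (huc i)]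
    simp only [bogoliubovVector, star_smul, Complex.star_def, Complex.conj_ofReal, smul_vecMulVec,
      vecMulVec_smul, Matrix.smul_mul, smul_smul]
    congr 1
    rw [← Complex.ofReal_mul, Real.mul_self_sqrt (abs_nonneg _)]
    exact_mod_cast Real.sign_mul_abs (c i)
  rw [Finset.sum_mul]
  simp_rw [hterm]
  rw [← Finset.sum_mul, ← Finset.mul_sum, hu.sum_vecMulVec_eq_one hcard, mul_one,
    nonsing_inv_mul _ hK]

end Bogoliubov

theorem bogoliubov_diagonalization_general (N : ℕ)
    (H : Matrix (Fin N ⊕ Fin N) (Fin N ⊕ Fin N) ℂ)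
    (hpos : H.PosDef)
    (hbos : tau1 N * H.map (starRingEnd ℂ) * tau1 N = H) :
    ∃ (ε : Fin N → ℝ) (ψp ψm : Fin N → (Fin N ⊕ Fin N → ℂ)),
      (∀ n, 0 < ε n) ∧
      (∀ n, ψm n = (tau1 N).mulVec (star (ψp n))) ∧
      (∀ n, (tau3 N * H).mulVec (ψp n) = ((ε n : ℝ) : ℂ) • ψp n) ∧
      (∀ n, (tau3 N * H).mulVec (ψm n) = (-((ε n : ℝ) : ℂ)) • ψm n) ∧
      (∀ m n, star (ψp m) ⬝ᵥ (tau3 N).mulVec (ψp n) = if m = n then (1 : ℂ) else 0) ∧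
      (∀ m n, star (ψm m) ⬝ᵥ (tau3 N).mulVec (ψm n) = if m = n then (-1 : ℂ) else 0) ∧
      (∀ m n, star (ψp m) ⬝ᵥ (tau3 N).mulVec (ψm n) = 0) ∧
      (∀ m n, star (ψm m) ⬝ᵥ (tau3 N).mulVec (ψp n) = 0) ∧
      (∑ n : Fin N, (vecMulVec (ψp n) (star (ψp n)) - vecMulVec (ψm n) (star (ψm n))))
        * tau3 N = 1 := by
  have hH : 0 ≤ H := Matrix.nonneg_iff_posSemidef.mpr hpos.posSemidef
  set K := CFC.sqrt H
  have hKh : K.IsHermitian := (Matrix.nonneg_iff_posSemidef.mp (CFC.sqrt_nonneg H)).1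
  have hKK : K * K = H := CFC.sqrt_mul_sqrt_self H hH
  have hKu : IsUnit K.det := isUnit_of_mul_isUnit_left (y := K.det) <| by
    rw [← det_mul, hKK]; exact hpos.isUnit.map detMonoidHom
  have hC : (tau1 N)ᴴ * tau1 N = 1 := by rw [conjTranspose_tau1, tau1_mul_tau1]
  have hCK : tau1 N * K.map (starRingEnd ℂ) = K * tau1 N :=
    mul_map_sqrt_of_mul_map_mul hC hH (by rw [conjTranspose_tau1, hbos])
  obtain ⟨ε, φ, hε, hu, huc⟩ := exists_pos_eigenvectors_mul_mul (N := N) (by simp) hKh hKu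
    (isHermitian_tau3 N) (tau3_mul_tau3 N) hC hCK (tau1_mul_map_tau3 N)
  set c : Fin N ⊕ Fin N → ℝ := Sum.elim ε (-ε)
  have hc : ∀ i, c i ≠ 0 := by rintro (n | n) <;> simp [c, (hε n).ne']
  set Ψ := fun i => bogoliubovVector K (c i) (Sum.elim φ (fun n => tau1 N *ᵥ star (φ n)) i)
  have hψm : ∀ n, tau1 N *ᵥ star (Ψ (.inl n)) = Ψ (.inr n) := fun n => by
    simp [Ψ, mulVec_star_bogoliubovVector hKu hCK, c, bogoliubovVector_neg]
  have heig := fun i => mulVec_bogoliubovVector hKu (huc i)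
  have hdot := hu.star_bogoliubovVector_dotProduct hKu hKh (tau3_mul_tau3 N) hc huc
  have hsum := hu.sum_sign_smul_vecMulVec_bogoliubovVector_mul (by simp) hKu hKh
    (tau3_mul_tau3 N) (isHermitian_tau3 N) huc
  rw [hKK] at heig
  refine ⟨ε, fun n => Ψ (.inl n), fun n => tau1 N *ᵥ star (Ψ (.inl n)), hε, fun _ => rfl,
    ?_, ?_, ?_, ?_, ?_, ?_, ?_⟩ <;> simp only [hψm]
  · exact fun n => heig (.inl n)
  · intro n; simpa [Ψ, c] using heig (.inr n)
  · intro m n; simpa [Ψ, c, Real.sign_of_pos (hε m)] using hdot (.inl m) (.inl n)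
  · intro m n; simpa [Ψ, c, Real.sign_neg, Real.sign_of_pos (hε m)] using hdot (.inr m) (.inr n)
  · intro m n; simpa [Ψ] using hdot (.inl m) (.inr n)
  · intro m n; simpa [Ψ] using hdot (.inr m) (.inl n)
  · simpa [Ψ, Fintype.sum_sum_type, c, Real.sign_neg, Real.sign_of_pos, hε, sub_eq_add_neg,
      Finset.sum_add_distrib] using hsum

/-- Bogoliubov diagonalization of a gapped stable quadratic bosonic Hamiltonian:
there exist positive energies `ε n` and eigenvectors `ψ⁺ n` (with particle-hole
partners `ψ⁻ n = τ₁ (ψ⁺ n)*`) satisfying `τ₃H ψ± = ±ε ψ±`, the τ₃-orthonormality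
relations, and the completeness relation. -/
theorem bogoliubov_diagonalization (N : ℕ) (hN : 0 < N)
    (H : Matrix (Fin N ⊕ Fin N) (Fin N ⊕ Fin N) ℂ)
    (hherm : H.IsHermitian) (hpos : H.PosDef)
    (hbos : tau1 N * H.map (starRingEnd ℂ) * tau1 N = H) :
    ∃ (ε : Fin N → ℝ) (ψp ψm : Fin N → (Fin N ⊕ Fin N → ℂ)),
      (∀ n, 0 < ε n) ∧
      (∀ n, ψm n = (tau1 N).mulVec (star (ψp n))) ∧
      (∀ n, (tau3 N * H).mulVec (ψp n) = ((ε n : ℝ) : ℂ) • ψp n) ∧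
      (∀ n, (tau3 N * H).mulVec (ψm n) = (-((ε n : ℝ) : ℂ)) • ψm n) ∧
      (∀ m n, star (ψp m) ⬝ᵥ (tau3 N).mulVec (ψp n) = if m = n then (1 : ℂ) else 0) ∧
      (∀ m n, star (ψm m) ⬝ᵥ (tau3 N).mulVec (ψm n) = if m = n then (-1 : ℂ) else 0) ∧
      (∀ m n, star (ψp m) ⬝ᵥ (tau3 N).mulVec (ψm n) = 0) ∧
      (∀ m n, star (ψm m) ⬝ᵥ (tau3 N).mulVec (ψp n) = 0) ∧
      (∑ n : Fin N, (vecMulVec (ψp n) (star (ψp n)) - vecMulVec (ψm n) (star (ψm n))))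
        * tau3 N = 1 :=
  bogoliubov_diagonalization_general N H hpos hbos
end
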